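/- Let Ω ⊆ ℂ be open and let y : ℂ → ℂ be holomorphic on Ω satisfying the Chazy equation y′′′ = 2y·y′′ − 3(y′)² on Ω. Define Q := y² − 6y′, R := y³ − 9y·y′ + 9y′′, and Δ := Q³ − R², and assume Δ(τ) ≠ 0 for all τ ∈ Ω. Set t := −R²/Δ. Then on Ω the identity 64·t³·(1−t)⁴·Δ = −(t′)⁶ holds. -/

import Mathlib

/-!
Along a Chazy solution, `Q` and `R` satisfy Ramanujan's system
`Q' = 2 (y Q - R) / 3`, `R' = y R - Q²`, so `Δ' = 2 y Δ`. Consequently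
`t' = 2 R Q² / Δ`, and with `1 - t = Q³ / Δ` both sides of the identity equal
`-64 R⁶ Q¹² / Δ⁶`.
-/

section

variable {𝕜 : Type*} [NontriviallyNormedField 𝕜]

noncomputable def chazyQ (y : 𝕜 → 𝕜) (τ : 𝕜) : 𝕜 := y τ ^ 2 - 6 * deriv y τ

noncomputable def chazyR (y : 𝕜 → 𝕜) (τ : 𝕜) : 𝕜 :=
  y τ ^ 3 - 9 * y τ * deriv y τ + 9 * deriv (deriv y) τ

theorem hasDerivAt_chazyQ [CharZero 𝕜] {y : 𝕜 → 𝕜} {τ : 𝕜} (hy : DifferentiableAt 𝕜 y τ)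
    (hy' : DifferentiableAt 𝕜 (deriv y) τ) :
    HasDerivAt (chazyQ y) (2 * (y τ * chazyQ y τ - chazyR y τ) / 3) τ := by
  refine ((hy.hasDerivAt.pow 2).sub (hy'.hasDerivAt.const_mul 6)).congr_deriv ?_
  simp only [chazyQ, chazyR]
  field_simp
  ring

theorem hasDerivAt_chazyR {y : 𝕜 → 𝕜} {τ : 𝕜} (hy : DifferentiableAt 𝕜 y τ)
    (hy' : DifferentiableAt 𝕜 (deriv y) τ) (hy'' : DifferentiableAt 𝕜 (deriv (deriv y)) τ)
    (hchazy : deriv (deriv (deriv y)) τ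
      = 2 * y τ * deriv (deriv y) τ - 3 * deriv y τ ^ 2) :
    HasDerivAt (chazyR y) (y τ * chazyR y τ - chazyQ y τ ^ 2) τ := by
  refine (((hy.hasDerivAt.pow 3).sub ((hy.hasDerivAt.const_mul 9).mul hy'.hasDerivAt)).add
    (hy''.hasDerivAt.const_mul 9)).congr_deriv ?_
  simp only [hchazy, chazyQ, chazyR]
  ring

variable [CharZero 𝕜] {y Q R : 𝕜 → 𝕜} {τ : 𝕜}

theorem hasDerivAt_discr_of_ramanujan (hQ : HasDerivAt Q (2 * (y τ * Q τ - R τ) / 3) τ)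
    (hR : HasDerivAt R (y τ * R τ - Q τ ^ 2) τ) :
    HasDerivAt (fun s => Q s ^ 3 - R s ^ 2) (2 * y τ * (Q τ ^ 3 - R τ ^ 2)) τ := by
  refine ((hQ.pow 3).sub (hR.pow 2)).congr_deriv ?_
  field_simp
  ring

theorem hasDerivAt_hauptmodul_of_ramanujan (hQ : HasDerivAt Q (2 * (y τ * Q τ - R τ) / 3) τ)
    (hR : HasDerivAt R (y τ * R τ - Q τ ^ 2) τ) (hΔ : Q τ ^ 3 - R τ ^ 2 ≠ 0) :
    HasDerivAt (fun s => -(R s ^ 2) / (Q s ^ 3 - R s ^ 2))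
      (2 * R τ * Q τ ^ 2 / (Q τ ^ 3 - R τ ^ 2)) τ := by
  refine ((hR.pow 2).neg.div (hasDerivAt_discr_of_ramanujan hQ hR) hΔ).congr_deriv ?_
  simp only [Pi.neg_apply, Pi.pow_apply]
  field_simp
  ring

end

theorem hauptmodul_relation {K : Type*} [Field K] {Q R : K} (hΔ : Q ^ 3 - R ^ 2 ≠ 0) :
    64 * (-(R ^ 2) / (Q ^ 3 - R ^ 2)) ^ 3 * (1 - -(R ^ 2) / (Q ^ 3 - R ^ 2)) ^ 4
      * (Q ^ 3 - R ^ 2) = -(2 * R * Q ^ 2 / (Q ^ 3 - R ^ 2)) ^ 6 := by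
  field_simp
  ring

theorem stmt_12 (Ω : Set ℂ) (hΩ : IsOpen Ω) (y : ℂ → ℂ)
    (hy : DifferentiableOn ℂ y Ω)
    (hchazy : ∀ τ ∈ Ω, deriv (deriv (deriv y)) τ
        = 2 * y τ * deriv (deriv y) τ - 3 * (deriv y τ) ^ 2)
    (Q R Δ : ℂ → ℂ)
    (hQ : Q = fun τ => y τ ^ 2 - 6 * deriv y τ)
    (hR : R = fun τ => y τ ^ 3 - 9 * y τ * deriv y τ + 9 * deriv (deriv y) τ)
    (hΔ : Δ = fun τ => Q τ ^ 3 - R τ ^ 2)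
    (hΔ0 : ∀ τ ∈ Ω, Δ τ ≠ 0)
    (t : ℂ → ℂ) (ht : t = fun τ => -(R τ ^ 2) / Δ τ) :
    ∀ τ ∈ Ω, 64 * t τ ^ 3 * (1 - t τ) ^ 4 * Δ τ = -(deriv t τ) ^ 6 := by
  subst hΔ ht
  obtain rfl : Q = chazyQ y := hQ
  obtain rfl : R = chazyR y := hR
  intro τ hτ
  have hA : AnalyticOnNhd ℂ y Ω := hy.analyticOnNhd hΩ
  have hy₀ := (hA τ hτ).differentiableAt
  have hy₁ := (hA.deriv τ hτ).differentiableAt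
  have hy₂ := (hA.deriv.deriv τ hτ).differentiableAt
  have ht := hasDerivAt_hauptmodul_of_ramanujan (hasDerivAt_chazyQ hy₀ hy₁)
    (hasDerivAt_chazyR hy₀ hy₁ hy₂ (hchazy τ hτ)) (hΔ0 τ hτ)
  rw [ht.deriv]
  exact hauptmodul_relation (hΔ0 τ hτ)
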